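/- arXiv:1810.06189 — 3 statements merged into one kernel-verified Lean document; each statement's English description precedes it below -/
import Mathlib

section
/- There is a universal constant C > 0 with the following property. Let M ≥ 10 and let Y be a real-valued random variable such that P(|Y| > s) ≤ e^{−M²s²} for every s > 0. Then for every a ∈ ℝ, 𝔼 φ(Y + a) ≥ φ(a) − C/M. -/
open MeasureTheory

/-- `φ(r) = e^{−r²/2}`. -/
noncomputable def gphi (r : ℝ) : ℝ := Real.exp (-r ^ 2 / 2)

/-!
`φ` is `1`-Lipschitz with values in `[0, 1]`, so `φ(a) - φ(y + a) ≤ min (|y|, 1)` pointwise,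
and the Gaussian tail bound gives, by the layer-cake formula,
`𝔼 min (|Y|, 1) ≤ ∫₀^∞ e^{−M²t²} dt = √π / (2M) ≤ 1 / M`. Hence `C = 1` works.
-/

lemma abs_le_exp_sq_div_two (x : ℝ) : |x| ≤ Real.exp (x ^ 2 / 2) := by
  nlinarith [Real.add_one_le_exp (x ^ 2 / 2), sq_nonneg (|x| - 1), sq_abs x]

lemma gphi_nonneg (r : ℝ) : 0 ≤ gphi r := (Real.exp_pos _).le

lemma gphi_le_one (r : ℝ) : gphi r ≤ 1 := by
  rw [gphi, Real.exp_le_one_iff]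
  nlinarith [sq_nonneg r]

lemma hasDerivAt_gphi (r : ℝ) : HasDerivAt gphi (-r * gphi r) r := by
  have h : HasDerivAt (fun r : ℝ => -r ^ 2 / 2) (-r) r := by
    simpa using ((hasDerivAt_pow 2 r).neg.div_const 2).congr_deriv (by ring)
  rw [mul_comm]
  exact h.exp

lemma lipschitzWith_one_gphi : LipschitzWith 1 gphi := by
  refine lipschitzWith_of_nnnorm_deriv_le (fun x => (hasDerivAt_gphi x).differentiableAt)
    fun x => ?_
  rw [(hasDerivAt_gphi x).deriv, ← NNReal.coe_le_coe, coe_nnnorm, NNReal.coe_one, norm_mul,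
    norm_neg, Real.norm_eq_abs, Real.norm_of_nonneg (gphi_nonneg x), gphi, neg_div, Real.exp_neg,
    ← div_eq_mul_inv, div_le_one (Real.exp_pos _)]
  exact abs_le_exp_sq_div_two x

lemma sub_le_min_abs_one_of_lipschitzWith_one {f : ℝ → ℝ} (hf : LipschitzWith 1 f)
    (hf₀ : ∀ x, 0 ≤ f x) (hf₁ : ∀ x, f x ≤ 1) (a y : ℝ) : f a - f (y + a) ≤ min |y| 1 := by
  refine le_min ?_ (by linarith [hf₀ (y + a), hf₁ a])
  have := hf.dist_le_mul a (y + a)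
  rw [Real.dist_eq, Real.dist_eq, show a - (y + a) = -y by ring, abs_neg, NNReal.coe_one,
    one_mul] at this
  exact (le_abs_self _).trans this

lemma integrable_min_abs_one (μ : Measure ℝ) [IsFiniteMeasure μ] :
    Integrable (fun y => min |y| 1) μ := by
  refine .of_bound (measurable_abs.min measurable_const).aestronglyMeasurable 1
    (.of_forall fun y => ?_)
  rw [Real.norm_of_nonneg (le_min (abs_nonneg y) zero_le_one)]
  exact min_le_right _ _

lemma sub_integral_min_abs_one_le_integral_comp_add {f : ℝ → ℝ} (hf : LipschitzWith 1 f)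
    (hf₀ : ∀ x, 0 ≤ f x) (hf₁ : ∀ x, f x ≤ 1) (μ : Measure ℝ) [IsProbabilityMeasure μ] (a : ℝ) :
    f a - ∫ y, min |y| 1 ∂μ ≤ ∫ y, f (y + a) ∂μ := by
  have hint := integrable_min_abs_one μ
  have hf_int : Integrable (fun y => f (y + a)) μ :=
    .of_bound (hf.continuous.comp (continuous_add_const a)).aestronglyMeasurable 1
      (.of_forall fun y => by rw [Real.norm_of_nonneg (hf₀ _)]; exact hf₁ _)
  calc f a - ∫ y, min |y| 1 ∂μ = ∫ y, (f a - min |y| 1) ∂μ := by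
        rw [integral_sub (integrable_const _) hint, integral_const, probReal_univ, one_smul]
    _ ≤ ∫ y, f (y + a) ∂μ := integral_mono ((integrable_const _).sub hint) hf_int fun y => by
        linarith [sub_le_min_abs_one_of_lipschitzWith_one hf hf₀ hf₁ a y]

lemma integral_min_abs_one_le_of_tail_le {μ : Measure ℝ} [IsFiniteMeasure μ] {M : ℝ}
    (hM : 0 < M)
    (htail : ∀ s : ℝ, 0 < s → μ {y | s < |y|} ≤ ENNReal.ofReal (Real.exp (-(M ^ 2 * s ^ 2)))) :
    ∫ y, min |y| 1 ∂μ ≤ √Real.pi / (2 * M) := by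
  rw [show √Real.pi / (2 * M) = √(Real.pi / M ^ 2) / 2 by
    rw [Real.sqrt_div Real.pi_pos.le, Real.sqrt_sq hM.le]; ring]
  rw [(integrable_min_abs_one μ).integral_eq_integral_meas_lt
    (.of_forall fun y => le_min (abs_nonneg y) zero_le_one), ← integral_gaussian_Ioi]
  refine integral_mono_of_nonneg (.of_forall fun t => measureReal_nonneg)
    (integrable_exp_neg_mul_sq (by positivity)).restrict ?_
  filter_upwards [ae_restrict_mem measurableSet_Ioi] with t ht
  have hsub : {y : ℝ | t < min |y| 1} ⊆ {y | t < |y|} := fun y (hy : t < min |y| 1) =>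
    show t < |y| from hy.trans_le (min_le_left _ _)
  rw [neg_mul]
  exact ENNReal.toReal_le_of_le_ofReal (Real.exp_pos _).le ((measure_mono hsub).trans (htail t ht))

lemma sqrt_pi_le_two : √Real.pi ≤ 2 :=
  Real.sqrt_le_iff.mpr ⟨zero_le_two, by linarith [Real.pi_le_four]⟩

/-- if `Y` is subgaussian with constant `1/M`, `M ≥ 10`, i.e.
`P(|Y| > s) ≤ e^{−M²s²}` for all `s > 0`, then `𝔼 φ(Y+a) ≥ φ(a) − C/M` for all `a`. -/
theorem expectation_gphi_shift_lower_bound :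
    ∃ C : ℝ, 0 < C ∧ ∀ M : ℝ, 10 ≤ M →
      ∀ μ : Measure ℝ, IsProbabilityMeasure μ →
        (∀ s : ℝ, 0 < s → μ {y | s < |y|} ≤ ENNReal.ofReal (Real.exp (-(M ^ 2 * s ^ 2)))) →
        ∀ a : ℝ, gphi a - C / M ≤ ∫ y, gphi (y + a) ∂μ := by
  refine ⟨1, one_pos, fun M hM μ _ htail a => ?_⟩
  calc gphi a - 1 / M ≤ gphi a - ∫ y, min |y| 1 ∂μ := by
        gcongr
        have hM₀ : 0 < M := by linarith
        calc ∫ y, min |y| 1 ∂μ ≤ √Real.pi / (2 * M) :=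
              integral_min_abs_one_le_of_tail_le hM₀ htail
          _ ≤ 2 / (2 * M) := by gcongr; exact sqrt_pi_le_two
          _ = 1 / M := by field_simp
    _ ≤ ∫ y, gphi (y + a) ∂μ :=
        sub_integral_min_abs_one_le_integral_comp_add lipschitzWith_one_gphi gphi_nonneg
          gphi_le_one μ a
end

section
/- There exist universal constants C, C₁, C₂ > 0 with the following property. For every positive integer n and every ρ ∈ (0, 1/2) there exists a finite set 𝒩 ⊆ 2B₂ⁿ \ (1/2)B₂ⁿ with #𝒩 ≤ (C/ρ)ⁿ such that for every positive integer N, every linear map A : ℝⁿ → ℝ^N, and every ξ ∈ S^{n−1}, there exists η ∈ 𝒩 with |Aη|² ≤ C₁|Aξ|² + C₂·(ρ²/n)·‖A‖_{HS}². -/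
/-!
Let `δ = ρ / √n` and let `𝒩` consist of the points of the lattice `δℤⁿ` in the annulus
`1/2 < |x| ≤ 2`. Rounding the coordinates of `ξ` to `δℤ` one at a time, each time up or down so
that the new error term is not positively correlated (after applying `A`) with the error
accumulated so far, produces `η ∈ δℤⁿ` with `|η - ξ| ≤ √n δ = ρ` and
`|A(η - ξ)|² ≤ δ² ‖A‖²_HS = (ρ²/n) ‖A‖²_HS`; hence `η ∈ 𝒩` and
`|Aη|² ≤ 2|Aξ|² + 2(ρ²/n) ‖A‖²_HS`.

The size of `𝒩` is bounded by Rankin's trick. With `t = 2/ρ`, Cauchy–Schwarz turns `|δk| ≤ 2`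
into `∑ |k_j| ≤ n t`, so every index `k ∈ ℤⁿ` of a point of `𝒩` has weight
`∏_j e^{1 - |k_j|/t} ≥ 1`, and the total weight is at most
`(∑_{a ∈ ℤ} e^{1 - |a|/t})ⁿ ≤ (e(2t+1))ⁿ`.
-/

open Finset Metric Set
open scoped RealInnerProductSpace

theorem hasSum_pow_natAbs {r : ℝ} (hr₀ : 0 ≤ r) (hr₁ : r < 1) :
    HasSum (fun a : ℤ => r ^ a.natAbs) ((1 + r) / (1 - r)) := by
  have hpos := hasSum_geometric_of_lt_one hr₀ hr₁
  have hneg : HasSum (fun n : ℕ => r ^ (-((n : ℤ) + 1)).natAbs) (r * (1 - r)⁻¹) := by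
    refine (hpos.mul_left r).congr_fun fun n => ?_
    rw [← pow_succ', ← Int.natCast_succ, Int.natAbs_neg, Int.natAbs_natCast]
  have hsum := HasSum.of_nat_of_neg_add_one (f := fun a : ℤ => r ^ a.natAbs) hpos hneg
  rwa [← one_add_mul, ← div_eq_mul_inv] at hsum

theorem sum_exp_neg_abs_div_le (s : Finset ℤ) {t : ℝ} (ht : 0 < t) :
    ∑ a ∈ s, Real.exp (-|(a : ℝ)| / t) ≤ 2 * t + 1 := by
  set r := Real.exp (-1 / t)
  have hr : r * (t + 1) ≤ t := by
    have hinv : r * Real.exp (1 / t) = 1 := by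
      rw [← Real.exp_add, neg_div, neg_add_cancel, Real.exp_zero]
    calc r * (t + 1) = r * t * (1 / t + 1) := by field_simp; ring
      _ ≤ r * t * Real.exp (1 / t) := by gcongr; exact Real.add_one_le_exp _
      _ = t := by rw [mul_right_comm, hinv, one_mul]
  have hr₁ : r < 1 := by nlinarith
  have hterm : ∀ a : ℤ, Real.exp (-|(a : ℝ)| / t) = r ^ a.natAbs := by
    intro a
    rw [← Real.exp_nat_mul, Nat.cast_natAbs, Int.cast_abs]
    ring_nf
  simp_rw [hterm]
  refine (sum_le_hasSum s (fun _ _ => by positivity)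
    (hasSum_pow_natAbs (by positivity) hr₁)).trans ?_
  rw [div_le_iff₀ (by linarith)]
  nlinarith

theorem card_le_sum_pow_of_one_le_prod {ι α : Type*} [Fintype ι] [DecidableEq ι] {s : Finset α}
    {S : Finset (ι → α)} (hS : S ⊆ Fintype.piFinset fun _ => s) {w : α → ℝ}
    (hw : ∀ a, 0 ≤ w a) (hprod : ∀ k ∈ S, 1 ≤ ∏ j, w (k j)) :
    (#S : ℝ) ≤ (∑ a ∈ s, w a) ^ Fintype.card ι := by
  calc (#S : ℝ) = ∑ _k ∈ S, 1 := by simp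
    _ ≤ ∑ k ∈ S, ∏ j, w (k j) := sum_le_sum hprod
    _ ≤ ∑ k ∈ Fintype.piFinset fun _ => s, ∏ j, w (k j) :=
      sum_le_sum_of_subset_of_nonneg hS fun k _ _ => prod_nonneg fun j _ => hw (k j)
    _ = (∑ a ∈ s, w a) ^ Fintype.card ι := by
      rw [sum_prod_piFinset, prod_const, card_univ]

theorem exists_int_round_mul_nonpos {δ : ℝ} (hδ : 0 < δ) (x c : ℝ) :
    ∃ m : ℤ, |δ * m - x| ≤ δ ∧ (δ * m - x) * c ≤ 0 := by
  rcases le_total 0 c with hc | hc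
  · have hlo : ⌊x / δ⌋ * δ ≤ x := (le_div_iff₀ hδ).1 (Int.floor_le _)
    have hhi : x < (⌊x / δ⌋ + 1) * δ := (div_lt_iff₀ hδ).1 (Int.lt_floor_add_one _)
    exact ⟨⌊x / δ⌋, abs_le.2 ⟨by linarith, by linarith⟩,
      mul_nonpos_of_nonpos_of_nonneg (by linarith) hc⟩
  · have hhi : x ≤ ⌈x / δ⌉ * δ := (div_le_iff₀ hδ).1 (Int.le_ceil _)
    have hlo : (⌈x / δ⌉ - 1) * δ < x :=
      (lt_div_iff₀ hδ).1 (by linarith [Int.ceil_lt_add_one (x / δ)])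
    exact ⟨⌈x / δ⌉, abs_le.2 ⟨by linarith, by linarith⟩,
      mul_nonpos_of_nonneg_of_nonpos (by linarith) hc⟩

theorem exists_int_round_norm_sum_smul_sq_le {ι E : Type*} [NormedAddCommGroup E]
    [InnerProductSpace ℝ E] [DecidableEq ι] {δ : ℝ} (hδ : 0 < δ) (x : ι → ℝ) (v : ι → E)
    (s : Finset ι) :
    ∃ m : ι → ℤ, (∀ j, |δ * m j - x j| ≤ δ) ∧
      ‖∑ j ∈ s, (δ * m j - x j) • v j‖ ^ 2 ≤ δ ^ 2 * ∑ j ∈ s, ‖v j‖ ^ 2 := by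
  induction s using Finset.induction_on with
  | empty =>
    choose m hm using fun j => exists_int_round_mul_nonpos hδ (x j) 0
    exact ⟨m, fun j => (hm j).1, by simp⟩
  | @insert i s hi ih =>
    obtain ⟨m, hm, hnorm⟩ := ih
    set u := ∑ j ∈ s, (δ * m j - x j) • v j
    obtain ⟨mi, hmi, hsign⟩ := exists_int_round_mul_nonpos hδ (x i) ⟪u, v i⟫
    refine ⟨Function.update m i mi, fun j => ?_, ?_⟩
    · rcases eq_or_ne j i with rfl | hj
      · simpa using hmi
      · simpa [hj] using hm j
    have hs : ∑ j ∈ s, (δ * Function.update m i mi j - x j) • v j = u :=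
      sum_congr rfl fun j hj => by rw [Function.update_of_ne (ne_of_mem_of_not_mem hj hi)]
    set γ := δ * mi - x i
    have hγ : γ ^ 2 ≤ δ ^ 2 := sq_le_sq' (abs_le.1 hmi).1 (abs_le.1 hmi).2
    rw [sum_insert hi, sum_insert hi, Function.update_self, hs, add_comm]
    calc ‖u + γ • v i‖ ^ 2 = ‖u‖ ^ 2 + 2 * (γ * ⟪u, v i⟫) + γ ^ 2 * ‖v i‖ ^ 2 := by
          rw [norm_add_sq_real, real_inner_smul_right, norm_smul, mul_pow, Real.norm_eq_abs, sq_abs]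
      _ ≤ δ ^ 2 * ∑ j ∈ s, ‖v j‖ ^ 2 + δ ^ 2 * ‖v i‖ ^ 2 := by
          gcongr
          nlinarith
      _ = δ ^ 2 * (‖v i‖ ^ 2 + ∑ j ∈ s, ‖v j‖ ^ 2) := by ring

namespace EuclideanSpace

variable {ι : Type*} [Fintype ι]

theorem sum_abs_le_sqrt_card_mul_norm (x : EuclideanSpace ℝ ι) :
    ∑ j, |x j| ≤ √(Fintype.card ι) * ‖x‖ := by
  rw [← Real.sqrt_sq (norm_nonneg x), ← Real.sqrt_mul (by positivity)]
  refine Real.le_sqrt_of_sq_le ?_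
  calc (∑ j, |x j|) ^ 2 ≤ #univ * ∑ j, |x j| ^ 2 := sq_sum_le_card_mul_sum_sq
    _ = Fintype.card ι * ‖x‖ ^ 2 := by simp [real_norm_sq_eq]

theorem norm_le_sqrt_card_mul_of_abs_le {x : EuclideanSpace ℝ ι} {δ : ℝ} (h : ∀ j, |x j| ≤ δ) :
    ‖x‖ ≤ √(Fintype.card ι) * δ := by
  rcases isEmpty_or_nonempty ι with hι | ⟨⟨j⟩⟩
  · simp [Subsingleton.elim x 0]
  have hδ : 0 ≤ δ := (abs_nonneg _).trans (h j)
  rw [← Real.sqrt_sq (norm_nonneg x), ← Real.sqrt_sq hδ, ← Real.sqrt_mul (by positivity)]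
  refine Real.sqrt_le_sqrt ?_
  calc ‖x‖ ^ 2 = ∑ j, |x j| ^ 2 := by simp [real_norm_sq_eq]
    _ ≤ ∑ _j : ι, δ ^ 2 := sum_le_sum fun j _ => pow_le_pow_left₀ (abs_nonneg _) (h j) 2
    _ = Fintype.card ι * δ ^ 2 := by simp

theorem map_eq_sum_smul [DecidableEq ι] {E : Type*} [AddCommGroup E] [Module ℝ E]
    (A : EuclideanSpace ℝ ι →ₗ[ℝ] E) (x : EuclideanSpace ℝ ι) :
    A x = ∑ j, x j • A (single j 1) := by
  conv_lhs => rw [← (basisFun ι ℝ).sum_repr x]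
  simp [map_sum]

end EuclideanSpace

section AnnulusLatticeNet

variable {ι : Type*} [Fintype ι]

noncomputable def latticePoint (δ : ℝ) (k : ι → ℤ) : EuclideanSpace ℝ ι :=
  WithLp.toLp 2 fun j => δ * k j

noncomputable def annulusLatticeIndices [DecidableEq ι] (δ : ℝ) (M : ℕ) : Finset (ι → ℤ) :=
  {k ∈ Fintype.piFinset fun _ => Icc (-M : ℤ) M | ‖latticePoint δ k‖ ∈ Ioc (1 / 2 : ℝ) 2}

open Classical in
noncomputable def annulusLatticeNet [DecidableEq ι] (δ : ℝ) (M : ℕ) : Finset (EuclideanSpace ℝ ι) :=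
  (annulusLatticeIndices δ M).image (latticePoint δ)

theorem annulusLatticeNet_subset [DecidableEq ι] (δ : ℝ) (M : ℕ) :
    (annulusLatticeNet (ι := ι) δ M : Set (EuclideanSpace ℝ ι)) ⊆
      closedBall 0 2 \ closedBall 0 (1 / 2) := by
  intro x hx
  simp only [annulusLatticeNet, annulusLatticeIndices, coe_image, coe_filter, Set.mem_image,
    Set.mem_ofPred_eq] at hx
  obtain ⟨k, ⟨-, hlo, hhi⟩, rfl⟩ := hx
  simpa using And.intro hhi hlo

theorem card_annulusLatticeNet_le [DecidableEq ι] {δ t : ℝ} (hδ : 0 < δ) (ht : 0 < t)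
    (hδt : 2 * √(Fintype.card ι) ≤ Fintype.card ι * t * δ) (M : ℕ) :
    (#(annulusLatticeNet (ι := ι) δ M) : ℝ) ≤ (Real.exp 1 * (2 * t + 1)) ^ Fintype.card ι := by
  have hweight : ∀ k ∈ annulusLatticeIndices (ι := ι) δ M,
      1 ≤ ∏ j, Real.exp (1 - |(k j : ℝ)| / t) := by
    intro k hk
    have hk2 : ‖latticePoint δ k‖ ≤ 2 := (mem_filter.1 hk).2.2
    have hl1 : ∑ j, |(k j : ℝ)| ≤ Fintype.card ι * t := by
      refine le_of_mul_le_mul_left ?_ hδ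
      calc δ * ∑ j, |(k j : ℝ)| = ∑ j, |latticePoint δ k j| := by
            simp [latticePoint, mul_sum, abs_mul, abs_of_pos hδ]
        _ ≤ √(Fintype.card ι) * 2 :=
          (EuclideanSpace.sum_abs_le_sqrt_card_mul_norm _).trans (by gcongr)
        _ ≤ δ * (Fintype.card ι * t) := by linarith
    rw [← Real.exp_sum, Real.one_le_exp_iff, sum_sub_distrib, ← sum_div, sub_nonneg,
      div_le_iff₀ ht]
    simpa using hl1
  calc (#(annulusLatticeNet (ι := ι) δ M) : ℝ) ≤ #(annulusLatticeIndices (ι := ι) δ M) := by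
        exact_mod_cast card_image_le
    _ ≤ (∑ a ∈ Icc (-M : ℤ) M, Real.exp (1 - |(a : ℝ)| / t)) ^ Fintype.card ι :=
        card_le_sum_pow_of_one_le_prod (filter_subset _ _) (fun _ => (Real.exp_pos _).le) hweight
    _ ≤ (Real.exp 1 * (2 * t + 1)) ^ Fintype.card ι := by
        gcongr
        simp_rw [sub_eq_add_neg, Real.exp_add, ← mul_sum, ← neg_div]
        gcongr
        exact sum_exp_neg_abs_div_le _ ht

theorem exists_mem_annulusLatticeNet_norm_map_sub_sq_le [DecidableEq ι] {E : Type*}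
    [NormedAddCommGroup E] [InnerProductSpace ℝ E] {δ : ℝ} (hδ : 0 < δ)
    (hρ : √(Fintype.card ι) * δ < 1 / 2) {M : ℕ} (hM : 2 ≤ M * δ)
    (A : EuclideanSpace ℝ ι →ₗ[ℝ] E) {ξ : EuclideanSpace ℝ ι} (hξ : ‖ξ‖ = 1) :
    ∃ η ∈ annulusLatticeNet δ M,
      ‖A (η - ξ)‖ ^ 2 ≤ δ ^ 2 * ∑ j, ‖A (EuclideanSpace.single j 1)‖ ^ 2 := by
  obtain ⟨m, hround, hA⟩ := exists_int_round_norm_sum_smul_sq_le hδ (fun j => ξ j)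
    (fun j => A (EuclideanSpace.single j 1)) univ
  set η := latticePoint δ m
  have hcoord : ∀ j, (η - ξ) j = δ * m j - ξ j := fun j => rfl
  have hdist : ‖η - ξ‖ < 1 / 2 :=
    (EuclideanSpace.norm_le_sqrt_card_mul_of_abs_le fun j => (hcoord j).symm ▸ hround j).trans_lt hρ
  have hlo : 1 / 2 < ‖η‖ := by linarith [norm_sub_norm_le ξ η, norm_sub_rev ξ η]
  have hhi : ‖η‖ ≤ 2 := by linarith [norm_le_insert' η ξ]
  refine ⟨η, mem_image_of_mem _ (mem_filter.2 ⟨Fintype.mem_piFinset.2 fun j => ?_, hlo, hhi⟩), ?_⟩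
  · rw [Finset.mem_Icc, ← abs_le, ← Int.cast_le (R := ℝ), Int.cast_abs, Int.cast_natCast]
    refine le_of_mul_le_mul_left ?_ hδ
    calc δ * |(m j : ℝ)| = ‖η j‖ := by simp [η, latticePoint, abs_of_pos hδ]
      _ ≤ 2 := (PiLp.norm_apply_le η j).trans hhi
      _ ≤ δ * M := by linarith
  · rwa [EuclideanSpace.map_eq_sum_smul A (η - ξ)]
end AnnulusLatticeNet

/-- comparison via the Hilbert–Schmidt norm: there is a net
`𝒩 ⊆ 2B₂ⁿ \ (1/2)B₂ⁿ` of cardinality at most `(C/ρ)ⁿ` such that for every linear map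
`A : ℝⁿ → ℝ^N` and every unit vector `ξ` there is `η ∈ 𝒩` with
`|Aη|² ≤ C₁|Aξ|² + C₂ (ρ²/n) ‖A‖²_{HS}`, where
`‖A‖²_{HS} = ∑_j |A e_j|²` for the standard basis `(e_j)`. -/
theorem net_comparison_hilbert_schmidt :
    ∃ C C₁ C₂ : ℝ, 0 < C ∧ 0 < C₁ ∧ 0 < C₂ ∧
      ∀ n : ℕ, 0 < n → ∀ ρ : ℝ, ρ ∈ Set.Ioo (0 : ℝ) (1 / 2) →
        ∃ 𝒩 : Finset (EuclideanSpace ℝ (Fin n)),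
          (↑𝒩 : Set (EuclideanSpace ℝ (Fin n))) ⊆
              closedBall 0 2 \ closedBall 0 (1 / 2) ∧
          (𝒩.card : ℝ) ≤ (C / ρ) ^ n ∧
          ∀ N : ℕ, ∀ A : EuclideanSpace ℝ (Fin n) →ₗ[ℝ] EuclideanSpace ℝ (Fin N),
            ∀ ξ : EuclideanSpace ℝ (Fin n), ‖ξ‖ = 1 →
              ∃ η ∈ 𝒩, ‖A η‖ ^ 2 ≤ C₁ * ‖A ξ‖ ^ 2 +
                C₂ * (ρ ^ 2 / n) *
                  ∑ j : Fin n, ‖A (EuclideanSpace.single j (1 : ℝ))‖ ^ 2 := by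
  refine ⟨14, 2, 2, by norm_num, by norm_num, by norm_num, fun n hn ρ ⟨hρ₀, hρ₁⟩ => ?_⟩
  have hn' : (0 : ℝ) < n := by exact_mod_cast hn
  set δ := ρ / √n
  have hδ : 0 < δ := by positivity
  have hδρ : √n * δ = ρ := mul_div_cancel₀ ρ (Real.sqrt_pos.2 hn').ne'
  have hδsq : δ ^ 2 = ρ ^ 2 / n := by rw [div_pow, Real.sq_sqrt hn'.le]
  refine ⟨annulusLatticeNet δ ⌈2 / δ⌉₊, annulusLatticeNet_subset _ _, ?_, fun N A ξ hξ => ?_⟩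
  · have hδt : 2 * √n ≤ n * (2 / ρ) * δ := by
      rw [← hδρ]
      field_simp
      simp [hn'.le]
    have hconst : Real.exp 1 * (2 * (2 / ρ) + 1) ≤ 14 / ρ := by
      rw [le_div_iff₀ hρ₀]
      field_simp
      nlinarith [Real.exp_one_lt_three, Real.exp_pos 1]
    calc (#(annulusLatticeNet δ ⌈2 / δ⌉₊) : ℝ) ≤ (Real.exp 1 * (2 * (2 / ρ) + 1)) ^ n := by
          simpa using card_annulusLatticeNet_le (ι := Fin n) hδ (t := 2 / ρ) (by positivity)
            (by simpa using hδt) _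
      _ ≤ (14 / ρ) ^ n := by gcongr
  · obtain ⟨η, hη, hA⟩ := exists_mem_annulusLatticeNet_norm_map_sub_sq_le hδ
      (by simpa [hδρ] using hρ₁) ((div_le_iff₀ hδ).1 (Nat.le_ceil _)) A hξ
    refine ⟨η, hη, ?_⟩
    calc ‖A η‖ ^ 2 ≤ (‖A ξ‖ + ‖A (η - ξ)‖) ^ 2 := by
          gcongr
          simpa using norm_add_le (A ξ) (A (η - ξ))
      _ ≤ 2 * ‖A ξ‖ ^ 2 + 2 * ‖A (η - ξ)‖ ^ 2 := by
          linarith [add_sq_le (a := ‖A ξ‖) (b := ‖A (η - ξ)‖)]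
      _ ≤ _ := by rw [← hδsq]; linarith
end

section
/- For every integer n ≥ 1, every r > 0 and every t ∈ ℝ, ∫_{−1}^{1} (1 − s²)^{n/2} · e^{−(rs+t)²/2} ds ≤ (√(2π)/√(n + r²)) · e^{−n t²/(2(n + r²))}. -/
open MeasureTheory Real

/-- for every `n ≥ 1`, `r > 0` and `t ∈ ℝ`,
`∫_{−1}^{1} (1−s²)^{n/2} e^{−(rs+t)²/2} ds ≤ (√(2π)/√(n+r²)) e^{−nt²/(2(n+r²))}`. -/
theorem integral_one_sub_sq_rpow_gaussian_upper_bound :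
    ∀ n : ℕ, 1 ≤ n → ∀ r : ℝ, 0 < r → ∀ t : ℝ,
      (∫ s in (-1 : ℝ)..1,
          (1 - s ^ 2) ^ ((n : ℝ) / 2) * Real.exp (-(r * s + t) ^ 2 / 2)) ≤
        (Real.sqrt (2 * Real.pi) / Real.sqrt (n + r ^ 2)) *
          Real.exp (-(n * t ^ 2) / (2 * (n + r ^ 2))) := by
  intro n hn r hr t
  set a : ℝ := (n : ℝ) + r ^ 2 with ha_def
  have hn1 : (1 : ℝ) ≤ (n : ℝ) := by exact_mod_cast hn
  have ha : 0 < a := by positivity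
  set c : ℝ := r * t / a with hc_def
  set g : ℝ → ℝ := fun s => Real.exp (-(↑n * t ^ 2) / (2 * a)) *
    Real.exp (-(a / 2) * (s + c) ^ 2) with hg_def
  by_cases hint : IntervalIntegrable
      (fun s => (1 - s ^ 2) ^ ((n : ℝ) / 2) * Real.exp (-(r * s + t) ^ 2 / 2))
      volume (-1 : ℝ) 1
  · have hgint : IntervalIntegrable g volume (-1 : ℝ) 1 := by
      apply Continuous.intervalIntegrable
      fun_prop
    have hgR : Integrable (fun s : ℝ => Real.exp (-(a / 2) * (s + c) ^ 2)) := by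
      exact (integrable_exp_neg_mul_sq (by positivity : (0:ℝ) < a / 2)).comp_add_right c
    have step1 : (∫ s in (-1 : ℝ)..1,
          (1 - s ^ 2) ^ ((n : ℝ) / 2) * Real.exp (-(r * s + t) ^ 2 / 2)) ≤
        ∫ s in (-1 : ℝ)..1, g s := by
      apply intervalIntegral.integral_mono_on (by norm_num) hint hgint
      intro s hs
      have hs1 : 0 ≤ 1 - s ^ 2 := by
        rcases hs with ⟨h1, h2⟩; nlinarith
      have h1 : (1 - s ^ 2 : ℝ) ≤ Real.exp (-s ^ 2) := by
        have := Real.add_one_le_exp (-s ^ 2); linarith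
      have h2 : (1 - s ^ 2) ^ ((n : ℝ) / 2) ≤ Real.exp (-s ^ 2 * ((n : ℝ) / 2)) := by
        rw [Real.exp_mul]
        exact Real.rpow_le_rpow hs1 h1 (by positivity)
      calc (1 - s ^ 2) ^ ((n : ℝ) / 2) * Real.exp (-(r * s + t) ^ 2 / 2)
          ≤ Real.exp (-s ^ 2 * ((n : ℝ) / 2)) * Real.exp (-(r * s + t) ^ 2 / 2) := by
            apply mul_le_mul_of_nonneg_right h2 (Real.exp_nonneg _)
        _ = g s := by
            simp only [hg_def, ← Real.exp_add]
            congr 1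
            rw [hc_def]
            field_simp
            ring
    have step2 : (∫ s in (-1 : ℝ)..1, g s) ≤
        (Real.sqrt (2 * Real.pi) / Real.sqrt a) *
          Real.exp (-(↑n * t ^ 2) / (2 * a)) := by
      rw [hg_def]
      rw [intervalIntegral.integral_const_mul]
      rw [mul_comm (Real.sqrt (2 * Real.pi) / Real.sqrt a) _]
      apply mul_le_mul_of_nonneg_left _ (Real.exp_nonneg _)
      have hle : (∫ s in (-1 : ℝ)..1, Real.exp (-(a / 2) * (s + c) ^ 2)) ≤
          ∫ s : ℝ, Real.exp (-(a / 2) * (s + c) ^ 2) := by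
        rw [intervalIntegral.integral_of_le (by norm_num : (-1:ℝ) ≤ 1)]
        exact setIntegral_le_integral hgR
          (Filter.Eventually.of_forall fun s => Real.exp_nonneg _)
      refine hle.trans_eq ?_
      have htr : (∫ s : ℝ, Real.exp (-(a / 2) * (s + c) ^ 2)) =
          ∫ s : ℝ, Real.exp (-(a / 2) * s ^ 2) :=
        integral_add_right_eq_self (fun s => Real.exp (-(a / 2) * s ^ 2)) c
      rw [htr, integral_gaussian]
      rw [show Real.pi / (a / 2) = (2 * Real.pi) / a by field_simp]
      exact Real.sqrt_div (by positivity) a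
    exact step1.trans step2
  · rw [intervalIntegral.integral_undef hint]
    positivity
end
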